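/- For every n ≥ 1 and b < 2^n, the parity of T^[n](2^n * a + b) depends on a: precisely, T^[n](b) and T^[n](2^n + b) = T^[n](b) + 3^(m(b,n)) have opposite parities. -/

import Mathlib

/-! Adding an even number `2d` to `b` does not change the parity that `T` sees, so
`T (2d + b) = 3^ε d + T b` with `ε = 1` exactly when `b` is odd. Iterating, a perturbation
`c · 2^n` of `b` is halved `n` times and tripled at each odd iterate of `b`, which gives
`T^[n] (c · 2^n + b) = T^[n] b + c · 3^(m b n)`. For `c = 1` the perturbation `3^(m b n)` is odd,
so it flips the parity of `T^[n] b`. -/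

def T (N : ℕ) : ℕ := if N % 2 = 0 then N / 2 else (3 * N + 1) / 2

def m (b n : ℕ) : ℕ := ((Finset.range n).filter (fun k => Odd (T^[k] b))).card

lemma T_two_mul_add (d b : ℕ) :
    T (2 * d + b) = 3 ^ (if Odd b then 1 else 0) * d + T b := by
  have hpar : (2 * d + b) % 2 = b % 2 := by omega
  simp only [T, hpar, Nat.odd_iff]
  split_ifs <;> omega

lemma m_succ (b n : ℕ) : m b (n + 1) = m (T b) n + if Odd b then 1 else 0 := by
  simp only [m, Finset.card_filter, Finset.sum_range_succ', Function.iterate_succ_apply,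
    Function.iterate_zero_apply]
  congr

lemma iterate_T_mul_two_pow_add (n c b : ℕ) :
    T^[n] (c * 2 ^ n + b) = T^[n] b + c * 3 ^ m b n := by
  induction n generalizing c b with
  | zero => simp [m, add_comm]
  | succ n ih =>
    calc T^[n + 1] (c * 2 ^ (n + 1) + b)
        = T^[n] ((3 ^ (if Odd b then 1 else 0) * c) * 2 ^ n + T b) := by
          rw [Function.iterate_succ_apply, pow_succ, mul_comm (2 ^ n) 2, ← mul_assoc,
            mul_comm c 2, mul_assoc, T_two_mul_add, mul_assoc]
      _ = T^[n + 1] b + c * 3 ^ m b (n + 1) := by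
          rw [ih, Function.iterate_succ_apply, m_succ, pow_add]
          ring

theorem stmt19 : ∀ n ≥ 1, ∀ b < 2 ^ n,
    T^[n] (2 ^ n + b) = T^[n] b + 3 ^ m b n ∧
    (Odd (T^[n] b) ↔ Even (T^[n] (2 ^ n + b))) := by
  intro n _ b _
  have hshift : T^[n] (2 ^ n + b) = T^[n] b + 3 ^ m b n := by
    simpa only [one_mul] using iterate_T_mul_two_pow_add n 1 b
  have hodd : Odd (3 ^ m b n) := Odd.pow (by decide)
  refine ⟨hshift, ?_⟩
  rw [hshift, Nat.even_add, ← Nat.not_odd_iff_even, ← Nat.not_odd_iff_even]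
  tauto
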